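/- For an r-th maximal bi-subalgebra B^[r] of su(2^p), the following abelian groups are pairwise isomorphic to (Fin (2p−r) → ZMod 2): (i) B^[r] under addition; (ii) 𝒢(B^[r]) under the operation ⊓ with identity B^[r]; (iii) the set of commutator subspaces { W(B) : B ∈ 𝒢(B^[r]) } under the operation induced by addition of elements, which is well defined and satisfies W(B₁) · W(B₂) = W(B₁ ⊓ B₂). In particular B ↦ W(B) is a group isomorphism from (𝒢(B^[r]), ⊓) onto the group of commutator subspaces. -/

import Mathlib

open scoped BigOperators

namespace QAP

/-- The index group `V = Z₂^p × Z₂^p` whose elements `(ζ,α)` label the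
spinor generators `S^ζ_α` of `su(2^p)`. -/
abbrev V (p : ℕ) : Type := (Fin p → ZMod 2) × (Fin p → ZMod 2)

/-- The symplectic pairing `ω((ζ,α),(η,β)) = ζ·β + η·α` over `ZMod 2`. -/
def omega {p : ℕ} (v w : V p) : ZMod 2 :=
  (∑ k, v.1 k * w.2 k) + (∑ k, w.1 k * v.2 k)

/-- `B` is an `r`-th maximal bi-subalgebra of `su(2^p)`: it is obtained from
`V` by a descending chain of `r` successive index-2 subgroups. -/
def IsRthMax {p : ℕ} (r : ℕ) (B : AddSubgroup (V p)) : Prop :=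
  ∃ c : ℕ → AddSubgroup (V p), c 0 = ⊤ ∧ c r = B ∧
    ∀ i < r, c (i + 1) ≤ c i ∧ (c (i + 1)).relIndex (c i) = 2

/-- `𝒢(G)`: the family consisting of `G` together with all its index-2 subgroups. -/
def GFam {p : ℕ} (G : AddSubgroup (V p)) : Set (AddSubgroup (V p)) :=
  {H | H = G ∨ (H ≤ G ∧ H.relIndex G = 2)}

/-- The commutator subspace `W(B)` determined by `B` relative to `B^[r]`:
elements of `V` commuting with exactly the members of `B` inside `B^[r]`. -/
def Wspace {p : ℕ} (Br B : AddSubgroup (V p)) : Set (V p) :=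
  {v | {b : V p | b ∈ Br ∧ omega v b = 0} = (B : Set (V p))}

/-- The `⊓` operation on subsets of a subgroup `G`:
`B₁ ⊓ B₂ = (B₁ ∩ B₂) ∪ ((G \ B₁) ∩ (G \ B₂))`. -/
def sqcap {p : ℕ} (G : AddSubgroup (V p)) (B₁ B₂ : Set (V p)) : Set (V p) :=
  (B₁ ∩ B₂) ∪ (((G : Set (V p)) \ B₁) ∩ (((G : Set (V p))) \ B₂))

attribute [local instance] Classical.propDecidable
lemma zmod2_cases (c : ZMod 2) : c = 0 ∨ c = 1 := by revert c; decide
lemma omega_add_left {p : ℕ} (v w u : V p) : omega (v + w) u = omega v u + omega w u := by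
  simp [omega, add_mul, mul_add, Finset.sum_add_distrib]; ring
lemma omega_add_right {p : ℕ} (u v w : V p) : omega u (v + w) = omega u v + omega u w := by
  simp [omega, mul_add, add_mul, Finset.sum_add_distrib]; ring
lemma omega_smul_left {p : ℕ} (c : ZMod 2) (v u : V p) : omega (c • v) u = c * omega v u := by
  simp [omega, mul_add, Finset.mul_sum, mul_assoc, mul_left_comm _ c]
noncomputable def omegaBil (p : ℕ) : V p →ₗ[ZMod 2] Module.Dual (ZMod 2) (V p) :=
  LinearMap.mk₂ (ZMod 2) omega omega_add_left omega_smul_left omega_add_right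
    (fun c v u => by
      rcases zmod2_cases c with h | h <;> subst h <;> simp [zero_smul, one_smul, omega])

instance instFinDimV (p : ℕ) : FiniteDimensional (ZMod 2) (V p) := Module.Finite.of_finite

lemma omegaBil_injective (p : ℕ) : Function.Injective (omegaBil p) := by
  rw [injective_iff_map_eq_zero]
  intro v hv
  have h1 : ∀ w, omega v w = 0 := fun w => by
    have := LinearMap.congr_fun hv w
    simpa [omegaBil] using this
  have hz : ∀ k, v.1 k = 0 := by
    intro k
    have := h1 (0, Pi.single k 1)
    simpa [omega, Pi.single_apply, mul_ite, Finset.sum_ite_eq'] using this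
  have ha : ∀ k, v.2 k = 0 := by
    intro k
    have := h1 (Pi.single k 1, 0)
    simpa [omega, Pi.single_apply, mul_ite, Finset.sum_ite_eq'] using this
  exact Prod.ext (funext hz) (funext ha)

lemma omegaBil_surjective (p : ℕ) : Function.Surjective (omegaBil p) :=
  (LinearMap.injective_iff_surjective_of_finrank_eq_finrank
    Subspace.dual_finrank_eq.symm).mp (omegaBil_injective p)

lemma finrank_of_card {M : Type*} [AddCommGroup M] [Module (ZMod 2) M] [Finite M]
    {m : ℕ} (h : Nat.card M = 2 ^ m) : Module.finrank (ZMod 2) M = m := by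
  have : Fintype M := Fintype.ofFinite M
  have h1 : Fintype.card M = 2 ^ Module.finrank (ZMod 2) M := by
    have := Module.card_eq_pow_finrank (K := ZMod 2) (V := M)
    rwa [ZMod.card] at this
  have h2 : Nat.card M = Fintype.card M := Nat.card_eq_fintype_card
  exact Nat.pow_right_injective le_rfl (by show 2 ^ _ = 2 ^ _; rw [← h1, ← h2, h])

noncomputable def equivOfFinrank (M : Type*) [AddCommGroup M] [Module (ZMod 2) M]
    [Module.Finite (ZMod 2) M] {m : ℕ} (h : Module.finrank (ZMod 2) M = m) :
    M ≃+ (Fin m → ZMod 2) :=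
  (Module.finBasisOfFinrankEq (ZMod 2) M h).equivFun.toAddEquiv



lemma card_V (p : ℕ) : Nat.card (V p) = 2 ^ (2 * p) := by
  simp [Nat.card_eq_fintype_card, two_mul, pow_add]

lemma index_of_rthMax {p r : ℕ} {Br : AddSubgroup (V p)} (h : IsRthMax r Br) :
    Br.index = 2 ^ r := by
  obtain ⟨c, h0, hrr, hstep⟩ := h
  suffices H : ∀ i, i ≤ r → (c i).index = 2 ^ i by rw [← hrr]; exact H r le_rfl
  intro i
  induction i with
  | zero => intro _; simp [h0]
  | succ n ih =>
    intro hi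
    obtain ⟨hle, hrel⟩ := hstep n (by omega)
    have key := AddSubgroup.relIndex_mul_index hle
    rw [hrel, ih (by omega)] at key
    rw [← key]; ring

lemma card_of_rthMax {p r : ℕ} {Br : AddSubgroup (V p)} (hr : r ≤ 2 * p)
    (h : IsRthMax r Br) : Nat.card Br = 2 ^ (2 * p - r) := by
  have key : Nat.card Br * Br.index = Nat.card (V p) := Br.card_mul_index
  rw [index_of_rthMax h, card_V] at key
  have h2 : (2 : ℕ) ^ (2 * p) = 2 ^ (2 * p - r) * 2 ^ r := by
    rw [← pow_add]; congr 1; omega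
  rw [h2] at key
  exact Nat.eq_of_mul_eq_mul_right (pow_pos (by norm_num : (0:ℕ) < 2) r) key

variable {p : ℕ}

noncomputable def chi (Br B : AddSubgroup (V p)) : ↥Br → ZMod 2 := fun b => if (b : V p) ∈ B then 0 else 1

lemma chi_eq_zero_iff {Br B : AddSubgroup (V p)} (b : ↥Br) :
    chi Br B b = 0 ↔ (b : V p) ∈ B := by
  unfold chi; split <;> simp_all

lemma chi_eq_one_iff {Br B : AddSubgroup (V p)} (b : ↥Br) :
    chi Br B b = 1 ↔ (b : V p) ∉ B := by
  unfold chi; split <;> simp_all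

lemma GFam_le {Br B : AddSubgroup (V p)} (hB : B ∈ GFam Br) : B ≤ Br := by
  rcases hB with h | ⟨h, _⟩
  · exact le_of_eq h
  · exact h

lemma chi_add {Br B : AddSubgroup (V p)} (hB : B ∈ GFam Br) (b₁ b₂ : ↥Br) :
    chi Br B (b₁ + b₂) = chi Br B b₁ + chi Br B b₂ := by
  rcases hB with h | ⟨hle, hrel⟩
  · subst h
    simp [chi, b₁.2, b₂.2, (B.add_mem b₁.2 b₂.2 : (b₁:V p) + b₂ ∈ B)]
  · have hidx : (B.addSubgroupOf Br).index = 2 := hrel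
    have key := AddSubgroup.add_mem_iff_of_index_two hidx (a := b₁) (b := b₂)
    simp only [AddSubgroup.mem_addSubgroupOf, AddSubgroup.coe_add] at key
    by_cases h1 : (b₁ : V p) ∈ B <;> by_cases h2 : (b₂ : V p) ∈ B <;>
      simp [chi, h1, h2, key] <;> decide

noncomputable def chiHom {Br B : AddSubgroup (V p)} (hB : B ∈ GFam Br) : ↥Br →+ ZMod 2 where
  toFun := chi Br B
  map_zero' := (chi_eq_zero_iff _).mpr B.zero_mem
  map_add' := chi_add hB

@[simp] lemma chiHom_apply {Br B : AddSubgroup (V p)} (hB : B ∈ GFam Br) (b : ↥Br) :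
    chiHom hB b = chi Br B b := rfl

noncomputable def Ksub (Br : AddSubgroup (V p)) (φ : ↥Br →+ ZMod 2) : AddSubgroup (V p) :=
  φ.ker.map Br.subtype

lemma mem_Ksub {Br : AddSubgroup (V p)} {φ : ↥Br →+ ZMod 2} {v : V p} :
    v ∈ Ksub Br φ ↔ ∃ h : v ∈ Br, φ ⟨v, h⟩ = 0 := by
  constructor
  · rintro ⟨⟨b, hb⟩, hker, rfl⟩
    exact ⟨hb, hker⟩
  · rintro ⟨h, hφ⟩
    exact ⟨⟨v, h⟩, hφ, rfl⟩

lemma Ksub_le {Br : AddSubgroup (V p)} (φ : ↥Br →+ ZMod 2) : Ksub Br φ ≤ Br := by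
  rintro v ⟨b, _, rfl⟩; exact b.2

lemma mem_Ksub_of_mem {Br : AddSubgroup (V p)} {φ : ↥Br →+ ZMod 2} {v : V p} (h : v ∈ Br) :
    v ∈ Ksub Br φ ↔ φ ⟨v, h⟩ = 0 := by
  rw [mem_Ksub]; exact ⟨fun ⟨_, h'⟩ => h', fun h' => ⟨h, h'⟩⟩

lemma Ksub_zero {Br : AddSubgroup (V p)} : Ksub Br (0 : ↥Br →+ ZMod 2) = Br := by
  ext v
  rw [mem_Ksub]
  exact ⟨fun ⟨h, _⟩ => h, fun h => ⟨h, rfl⟩⟩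

lemma Ksub_mem_GFam {Br : AddSubgroup (V p)} (φ : ↥Br →+ ZMod 2) : Ksub Br φ ∈ GFam Br := by
  by_cases hφ : φ = 0
  · left; rw [hφ, Ksub_zero]
  · right
    refine ⟨Ksub_le φ, ?_⟩
    have hcm : (Ksub Br φ).addSubgroupOf Br = φ.ker := by
      unfold Ksub AddSubgroup.addSubgroupOf
      exact AddSubgroup.comap_map_eq_self_of_injective Br.subtype_injective _
    have hsurj : Function.Surjective φ := by
      intro c
      rcases zmod2_cases c with rfl | rfl
      · exact ⟨0, φ.map_zero⟩
      · obtain ⟨b, hb⟩ : ∃ b, φ b ≠ 0 := by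
          by_contra h
          push_neg at h
          exact hφ (AddMonoidHom.ext fun b => h b)
        rcases zmod2_cases (φ b) with h | h
        · exact absurd h hb
        · exact ⟨b, h⟩
    have hker : (φ.ker).index = 2 := by
      rw [AddSubgroup.index_ker]
      rw [AddMonoidHom.range_eq_top.mpr hsurj]
      rw [Nat.card_congr AddSubgroup.topEquiv.toEquiv, Nat.card_zmod]
    rw [AddSubgroup.relIndex, hcm]
    exact hker


lemma chi_Ksub {Br : AddSubgroup (V p)} (φ : ↥Br →+ ZMod 2) (b : ↥Br) :
    chi Br (Ksub Br φ) b = φ b := by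
  by_cases h : (b : V p) ∈ Ksub Br φ
  · rw [(chi_eq_zero_iff b).mpr h]
    have := (mem_Ksub_of_mem b.2).mp h
    simpa using this.symm
  · rw [(chi_eq_one_iff b).mpr h]
    have : ¬ φ ⟨(b : V p), b.2⟩ = 0 := fun hc => h ((mem_Ksub_of_mem b.2).mpr hc)
    rcases zmod2_cases (φ b) with h0 | h1
    · exact absurd (by simpa using h0) this
    · exact h1.symm

lemma chiHom_Ksub {Br : AddSubgroup (V p)} (φ : ↥Br →+ ZMod 2) :
    chiHom (Ksub_mem_GFam φ) = φ :=
  AddMonoidHom.ext fun b => chi_Ksub φ b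

lemma Ksub_chiHom {Br B : AddSubgroup (V p)} (hB : B ∈ GFam Br) :
    Ksub Br (chiHom hB) = B := by
  ext v
  rw [mem_Ksub]
  constructor
  · rintro ⟨h, hv⟩
    exact (chi_eq_zero_iff (⟨v, h⟩ : ↥Br)).mp hv
  · intro hv
    exact ⟨GFam_le hB hv, (chi_eq_zero_iff (⟨v, GFam_le hB hv⟩ : ↥Br)).mpr hv⟩

lemma Ksub_injective {Br : AddSubgroup (V p)} : Function.Injective (Ksub Br) := by
  intro φ ψ h
  ext b
  rw [← chi_Ksub φ b, ← chi_Ksub ψ b, h]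

lemma Ksub_add_eq_sqcap {Br : AddSubgroup (V p)} (φ ψ : ↥Br →+ ZMod 2) :
    (Ksub Br (φ + ψ) : Set (V p)) = sqcap Br (Ksub Br φ) (Ksub Br ψ) := by
  ext v
  simp only [sqcap, Set.mem_union, Set.mem_inter_iff, Set.mem_diff, SetLike.mem_coe]
  constructor
  · intro hv
    have hBr : v ∈ Br := Ksub_le _ hv
    have hsum : φ ⟨v, hBr⟩ + ψ ⟨v, hBr⟩ = 0 := (mem_Ksub_of_mem hBr).mp hv
    rcases zmod2_cases (φ ⟨v, hBr⟩) with h1 | h1 <;> rcases zmod2_cases (ψ ⟨v, hBr⟩) with h2 | h2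
    · exact Or.inl ⟨(mem_Ksub_of_mem hBr).mpr h1, (mem_Ksub_of_mem hBr).mpr h2⟩
    · rw [h1, h2] at hsum; exact absurd hsum (by decide)
    · rw [h1, h2] at hsum; exact absurd hsum (by decide)
    · refine Or.inr ⟨⟨hBr, fun hc => ?_⟩, hBr, fun hc => ?_⟩
      · rw [(mem_Ksub_of_mem hBr).mp hc] at h1; exact absurd h1 (by decide)
      · rw [(mem_Ksub_of_mem hBr).mp hc] at h2; exact absurd h2 (by decide)
  · rintro (⟨h1, h2⟩ | ⟨⟨hBr, h1⟩, _, h2⟩)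
    · have hBr : v ∈ Br := Ksub_le _ h1
      rw [mem_Ksub_of_mem hBr] at h1 h2 ⊢
      simp [AddMonoidHom.add_apply, h1, h2]
    · rw [mem_Ksub_of_mem hBr] at h1 h2 ⊢
      rcases zmod2_cases (φ ⟨v, hBr⟩) with hφ | hφ
      · exact absurd hφ h1
      rcases zmod2_cases (ψ ⟨v, hBr⟩) with hψ | hψ
      · exact absurd hψ h2
      simp [AddMonoidHom.add_apply, hφ, hψ]; decide


noncomputable def Omg (Br : AddSubgroup (V p)) (v : V p) : ↥Br →+ ZMod 2 where
  toFun := fun b => omega v (b : V p)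
  map_zero' := by simp [omega]
  map_add' := fun b₁ b₂ => by simpa using omega_add_right v b₁ b₂

@[simp] lemma Omg_apply (Br : AddSubgroup (V p)) (v : V p) (b : ↥Br) :
    Omg Br v b = omega v b := rfl

lemma Omg_add (Br : AddSubgroup (V p)) (v w : V p) :
    Omg Br (v + w) = Omg Br v + Omg Br w :=
  AddMonoidHom.ext fun b => by simpa using omega_add_left v w b

lemma Ksub_Omg_set (Br : AddSubgroup (V p)) (v : V p) :
    {b : V p | b ∈ Br ∧ omega v b = 0} = (Ksub Br (Omg Br v) : Set (V p)) := by
  ext b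
  simp only [Set.mem_setOf_eq, SetLike.mem_coe, mem_Ksub]
  exact ⟨fun ⟨h, h0⟩ => ⟨h, h0⟩, fun ⟨h, h0⟩ => ⟨h, h0⟩⟩

lemma mem_Wspace_iff {Br B : AddSubgroup (V p)} (hB : B ∈ GFam Br) (v : V p) :
    v ∈ Wspace Br B ↔ Omg Br v = chiHom hB := by
  unfold Wspace
  rw [Set.mem_setOf_eq, Ksub_Omg_set]
  constructor
  · intro h
    have : Ksub Br (Omg Br v) = B := SetLike.coe_injective h
    rw [← Ksub_chiHom hB] at this
    exact Ksub_injective this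
  · intro h
    rw [h, Ksub_chiHom hB]

noncomputable abbrev Brsub (Br : AddSubgroup (V p)) : Submodule (ZMod 2) (V p) :=
  AddSubgroup.toZModSubmodule 2 Br

/-- An additive character of `Br` as a linear functional on the associated submodule. -/
noncomputable def toDualFun {Br : AddSubgroup (V p)} (φ : ↥Br →+ ZMod 2) :
    Module.Dual (ZMod 2) ↥(Brsub Br) where
  toFun := fun x => φ ⟨x.1, x.2⟩
  map_add' := fun x y => by
    have := φ.map_add ⟨x.1, x.2⟩ ⟨y.1, y.2⟩
    convert this using 2
    exact Subtype.ext rfl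
  map_smul' := fun c x => by
    rcases zmod2_cases c with rfl | rfl
    · have h0 : ((0 : ZMod 2) • x) = (0 : ↥(Brsub Br)) := zero_smul _ x
      rw [h0]
      have key : ∀ (h : ((0 : ↥(Brsub Br)) : V p) ∈ Br),
          (⟨((0 : ↥(Brsub Br)) : V p), h⟩ : ↥Br) = 0 := fun h => Subtype.ext (by simp)
      show φ ⟨((0 : ↥(Brsub Br)) : V p), _⟩ = _
      rw [RingHom.id_apply, zero_smul]
      exact (congrArg φ (key _)).trans φ.map_zero
    · have h1 : ((1 : ZMod 2) • x) = x := one_smul _ x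
      rw [h1]
      simp

lemma Omg_surjective (Br : AddSubgroup (V p)) :
    Function.Surjective (Omg Br) := by
  intro φ
  obtain ⟨Ψ, hΨ⟩ := LinearMap.dualMap_surjective_of_injective
    (Submodule.injective_subtype (Brsub Br)) (toDualFun φ)
  obtain ⟨v, hv⟩ := omegaBil_surjective p Ψ
  refine ⟨v, AddMonoidHom.ext fun b => ?_⟩
  have h1 : Ψ (b : V p) = toDualFun φ ⟨(b : V p), b.2⟩ := by
    have := LinearMap.congr_fun hΨ ⟨(b : V p), b.2⟩
    simpa using this
  have h2 : omega v (b : V p) = Ψ (b : V p) := by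
    have := LinearMap.congr_fun hv (b : V p)
    simpa [omegaBil] using this
  simp only [Omg_apply, h2, h1]
  show φ ⟨(b : V p), b.2⟩ = φ b
  congr

def subEquiv (Br : AddSubgroup (V p)) : ↥Br ≃+ ↥(Brsub Br) where
  toFun := fun x => ⟨x.1, x.2⟩
  invFun := fun x => ⟨x.1, x.2⟩
  left_inv := fun _ => rfl
  right_inv := fun _ => rfl
  map_add' := fun _ _ => rfl

lemma card_Brsub {r : ℕ} {Br : AddSubgroup (V p)} (hr : r ≤ 2 * p) (h : IsRthMax r Br) :
    Nat.card ↥(Brsub Br) = 2 ^ (2 * p - r) := by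
  rw [← card_of_rthMax hr h]
  exact Nat.card_congr (subEquiv Br).toEquiv.symm

lemma finrank_Brsub {r : ℕ} {Br : AddSubgroup (V p)} (hr : r ≤ 2 * p) (h : IsRthMax r Br) :
    Module.finrank (ZMod 2) ↥(Brsub Br) = 2 * p - r :=
  finrank_of_card (card_Brsub hr h)

noncomputable def brEquiv {r : ℕ} {Br : AddSubgroup (V p)} (hr : r ≤ 2 * p)
    (h : IsRthMax r Br) : ↥Br ≃+ (Fin (2 * p - r) → ZMod 2) :=
  (subEquiv Br).trans (equivOfFinrank _ (finrank_Brsub hr h))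

noncomputable def dualAddEquiv (Br : AddSubgroup (V p)) :
    (↥Br →+ ZMod 2) ≃+ Module.Dual (ZMod 2) ↥(Brsub Br) where
  toFun := toDualFun
  invFun := fun ψ =>
    { toFun := fun b => ψ ⟨b.1, b.2⟩
      map_zero' := by
        show ψ ⟨(0 : ↥Br).1, (0 : ↥Br).2⟩ = 0
        have h : (⟨(0 : ↥Br).1, (0 : ↥Br).2⟩ : ↥(Brsub Br)) = 0 := Subtype.ext rfl
        rw [h]
        exact ψ.map_zero
      map_add' := fun b₁ b₂ => by
        show ψ ⟨(b₁ + b₂ : ↥Br).1, (b₁ + b₂ : ↥Br).2⟩ = _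
        have h : (⟨(b₁ + b₂ : ↥Br).1, (b₁ + b₂ : ↥Br).2⟩ : ↥(Brsub Br))
            = ⟨b₁.1, b₁.2⟩ + ⟨b₂.1, b₂.2⟩ := Subtype.ext rfl
        rw [h]
        exact ψ.map_add _ _ }
  left_inv := fun φ => AddMonoidHom.ext fun b => rfl
  right_inv := fun ψ => LinearMap.ext fun x => rfl
  map_add' := fun φ₁ φ₂ => LinearMap.ext fun x => rfl

noncomputable instance (Br : AddSubgroup (V p)) :
    Module.Finite (ZMod 2) ↥(Brsub Br) := Module.Finite.of_finite

lemma finrank_dual_Brsub {r : ℕ} {Br : AddSubgroup (V p)} (hr : r ≤ 2 * p)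
    (h : IsRthMax r Br) :
    Module.finrank (ZMod 2) (Module.Dual (ZMod 2) ↥(Brsub Br)) = 2 * p - r := by
  rw [Subspace.dual_finrank_eq]
  exact finrank_Brsub hr h

noncomputable def charEquiv {r : ℕ} {Br : AddSubgroup (V p)} (hr : r ≤ 2 * p)
    (h : IsRthMax r Br) : (↥Br →+ ZMod 2) ≃+ (Fin (2 * p - r) → ZMod 2) :=
  (dualAddEquiv Br).trans (equivOfFinrank _ (finrank_dual_Brsub hr h))

lemma zmod2_add_self (a : ZMod 2) : a + a = 0 := by revert a; decide

lemma v_add_self (v : V p) : v + v = 0 := by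
  ext k <;> exact zmod2_add_self _

lemma chiHom_congr {Br B B' : AddSubgroup (V p)} (hB : B ∈ GFam Br) (hB' : B' ∈ GFam Br)
    (h : B = B') : chiHom hB = chiHom hB' := by subst h; rfl

lemma chiHom_self {Br : AddSubgroup (V p)} (h : Br ∈ GFam Br) : chiHom h = 0 :=
  AddMonoidHom.ext fun b => (chi_eq_zero_iff b).mpr b.2

lemma eq_Ksub_of_sqcap {Br B₁ B₂ B₃ : AddSubgroup (V p)} (h₁ : B₁ ∈ GFam Br)
    (h₂ : B₂ ∈ GFam Br)
    (hset : (B₃ : Set (V p)) = sqcap Br (B₁ : Set (V p)) (B₂ : Set (V p))) :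
    B₃ = Ksub Br (chiHom h₁ + chiHom h₂) := by
  apply SetLike.coe_injective
  rw [hset, Ksub_add_eq_sqcap, Ksub_chiHom h₁, Ksub_chiHom h₂]

lemma chiHom_of_sqcap {Br B₁ B₂ B₃ : AddSubgroup (V p)} (h₁ : B₁ ∈ GFam Br)
    (h₂ : B₂ ∈ GFam Br) (h₃ : B₃ ∈ GFam Br)
    (hset : (B₃ : Set (V p)) = sqcap Br (B₁ : Set (V p)) (B₂ : Set (V p))) :
    chiHom h₃ = chiHom h₁ + chiHom h₂ := by
  rw [chiHom_congr h₃ (Ksub_mem_GFam _) (eq_Ksub_of_sqcap h₁ h₂ hset)]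
  exact chiHom_Ksub _



/-- for an `r`-th maximal bi-subalgebra `B^[r]` of `su(2^p)`:
(i) `B^[r]` is isomorphic as an additive group to `Z₂^(2p−r)`;
(ii) `𝒢(B^[r])` is closed under `⊓` and carries a bijection to `Z₂^(2p−r)`
sending `B^[r]` to `0` and transporting `⊓` to addition;
(iii) the induced operation on commutator subspaces is well defined, with
`W(B₁) · W(B₂) = W(B₁ ⊓ B₂)`, and `B ↦ W(B)` is injective on `𝒢(B^[r])`,
hence a group isomorphism from `(𝒢(B^[r]), ⊓)` onto the commutator subspaces. -/
theorem isomorphisms_of_partition {p r : ℕ} (hp : 1 ≤ p) (hr : r ≤ 2 * p)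
    (Br : AddSubgroup (V p)) (hBr : IsRthMax r Br) :
    Nonempty (Br ≃+ (Fin (2 * p - r) → ZMod 2)) ∧
    (∀ B₁ ∈ GFam Br, ∀ B₂ ∈ GFam Br, ∃ B₃ ∈ GFam Br,
      (B₃ : Set (V p)) = sqcap Br (B₁ : Set (V p)) (B₂ : Set (V p))) ∧
    (∃ e : {B : AddSubgroup (V p) // B ∈ GFam Br} ≃ (Fin (2 * p - r) → ZMod 2),
      e ⟨Br, Or.inl rfl⟩ = 0 ∧
      ∀ B₁ B₂ B₃ : {B : AddSubgroup (V p) // B ∈ GFam Br},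
        ((B₃ : AddSubgroup (V p)) : Set (V p)) =
            sqcap Br ((B₁ : AddSubgroup (V p)) : Set (V p))
              ((B₂ : AddSubgroup (V p)) : Set (V p)) →
          e B₃ = e B₁ + e B₂) ∧
    (∀ B₁ ∈ GFam Br, ∀ B₂ ∈ GFam Br, ∀ B₃ ∈ GFam Br,
      (B₃ : Set (V p)) = sqcap Br (B₁ : Set (V p)) (B₂ : Set (V p)) →
        (∀ v₁ ∈ Wspace Br B₁, ∀ v₂ ∈ Wspace Br B₂, v₁ + v₂ ∈ Wspace Br B₃) ∧
        Wspace Br B₃ =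
          {u : V p | ∃ v₁ ∈ Wspace Br B₁, ∃ v₂ ∈ Wspace Br B₂, u = v₁ + v₂}) ∧
    (∀ B₁ ∈ GFam Br, ∀ B₂ ∈ GFam Br, Wspace Br B₁ = Wspace Br B₂ → B₁ = B₂) := by
  refine ⟨⟨brEquiv hr hBr⟩, ?_, ?_, ?_, ?_⟩
  · -- closure
    intro B₁ h₁ B₂ h₂
    refine ⟨Ksub Br (chiHom h₁ + chiHom h₂), Ksub_mem_GFam _, ?_⟩
    rw [Ksub_add_eq_sqcap, Ksub_chiHom h₁, Ksub_chiHom h₂]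
  · -- the equivalence e
    refine ⟨(Equiv.mk (fun B => chiHom B.2) (fun φ => ⟨Ksub Br φ, Ksub_mem_GFam φ⟩)
        (fun B => Subtype.ext (Ksub_chiHom B.2)) (fun φ => chiHom_Ksub φ)).trans
        (charEquiv hr hBr).toEquiv, ?_, ?_⟩
    · show charEquiv hr hBr (chiHom (Or.inl rfl : Br ∈ GFam Br)) = 0
      rw [chiHom_self (Or.inl rfl : Br ∈ GFam Br)]
      exact map_zero _
    · intro B₁ B₂ B₃ hset
      show charEquiv hr hBr (chiHom B₃.2) = charEquiv hr hBr (chiHom B₁.2) +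
        charEquiv hr hBr (chiHom B₂.2)
      rw [chiHom_of_sqcap B₁.2 B₂.2 B₃.2 hset]
      exact map_add _ _ _
  · -- Wspace operation
    intro B₁ h₁ B₂ h₂ B₃ h₃ hset
    have hchi : chiHom h₃ = chiHom h₁ + chiHom h₂ := chiHom_of_sqcap h₁ h₂ h₃ hset
    have hadd : ∀ v₁ ∈ Wspace Br B₁, ∀ v₂ ∈ Wspace Br B₂, v₁ + v₂ ∈ Wspace Br B₃ := by
      intro v₁ hv₁ v₂ hv₂
      rw [mem_Wspace_iff h₁] at hv₁
      rw [mem_Wspace_iff h₂] at hv₂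
      rw [mem_Wspace_iff h₃, Omg_add, hv₁, hv₂, hchi]
    refine ⟨hadd, ?_⟩
    ext u
    simp only [Set.mem_setOf_eq]
    constructor
    · intro hu
      rw [mem_Wspace_iff h₃] at hu
      obtain ⟨v₁, hv₁⟩ := Omg_surjective Br (chiHom h₁)
      refine ⟨v₁, (mem_Wspace_iff h₁ v₁).mpr hv₁, v₁ + u, ?_, ?_⟩
      · rw [mem_Wspace_iff h₂, Omg_add, hv₁, hu, hchi]
        ext b
        simp only [AddMonoidHom.add_apply]
        rw [← add_assoc, zmod2_add_self, zero_add]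
      · rw [← add_assoc, v_add_self, zero_add]
    · rintro ⟨v₁, hv₁, v₂, hv₂, rfl⟩
      exact hadd v₁ hv₁ v₂ hv₂
  · -- injectivity of Wspace
    intro B₁ h₁ B₂ h₂ hW
    obtain ⟨v, hv⟩ := Omg_surjective Br (chiHom h₁)
    have hv₁ : v ∈ Wspace Br B₁ := (mem_Wspace_iff h₁ v).mpr hv
    have hv₂ : v ∈ Wspace Br B₂ := hW ▸ hv₁
    rw [mem_Wspace_iff h₂] at hv₂
    have : chiHom h₁ = chiHom h₂ := by rw [← hv, hv₂]
    rw [← Ksub_chiHom h₁, ← Ksub_chiHom h₂, this]
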